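/- Let φ : X̂ → ℝ be continuous, bi-scaling-invariant, G-invariant and g̃-admissible. Then for all real numbers x_1,…,x_m > 0, (φ−ψ̃)((1,x_1,…,x_m),(1,x_1,…,x_k)) ≥ (φ−ψ̃)((1,x_1,…,x_k,ζ,…,ζ),(1,x_1,…,x_k)), where ζ = (x_{k+1}⋯x_m)^{1/(m−k)} occupies the last m−k coordinates of the first vector. -/

import Mathlib

open Complex MeasureTheory Finset

noncomputable section

/-- Squared norm of a complex vector. -/
def nsq {n : ℕ} (z : Fin n → ℂ) : ℝ := ∑ i, ‖z i‖ ^ 2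

/-- Laplacian at a point of a real-valued function of one complex variable. -/
def lap (f : ℂ → ℝ) (t : ℂ) : ℝ :=
  lineDeriv ℝ (fun s => lineDeriv ℝ f s 1) t 1 +
  lineDeriv ℝ (fun s => lineDeriv ℝ f s Complex.I) t Complex.I

/-- The point of `Fin (m+1)` corresponding to an index in `{0,...,k}`. -/
def embX (m k : ℕ) (hkm : k ≤ m) (i : Fin (k + 1)) : Fin (m + 1) :=
  ⟨(i : ℕ), by have := i.isLt; omega⟩

/-- Points of `(ℂ^{m+1}\{0}) × (ℂ^{k+1}\{0})` lifting the blow-up X. -/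
def inXhat (m k : ℕ) (hkm : k ≤ m)
    (p : (Fin (m + 1) → ℂ) × (Fin (k + 1) → ℂ)) : Prop :=
  p.1 ≠ 0 ∧ p.2 ≠ 0 ∧
    ∀ i j : Fin (k + 1),
      p.1 (embX m k hkm i) * p.2 j = p.1 (embX m k hkm j) * p.2 i

def psiX1 (m k : ℕ) (p : (Fin (m + 1) → ℂ) × (Fin (k + 1) → ℂ)) : ℝ :=
  Real.log
    ((∏ i ∈ Finset.univ.filter (fun i : Fin (m + 1) => (i : ℕ) ≤ k),
        ‖p.1 i‖) ^ (2 * ((m : ℝ) + 1 - (k : ℝ)) / ((k : ℝ) + 1)) *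
      (∏ j : Fin (k + 1), ‖p.2 j‖) ^ (2 * (k : ℝ) / ((k : ℝ) + 1)) /
      (nsq p.1 ^ ((m : ℝ) + 1 - (k : ℝ)) * nsq p.2 ^ (k : ℝ)))

def psiX2 (m k : ℕ) (p : (Fin (m + 1) → ℂ) × (Fin (k + 1) → ℂ)) : ℝ :=
  Real.log
    ((∏ i ∈ Finset.univ.filter (fun i : Fin (m + 1) => k + 1 ≤ (i : ℕ)),
        ‖p.1 i‖) ^ (2 * ((m : ℝ) + 1 - (k : ℝ)) / ((m : ℝ) - (k : ℝ))) *
      (∏ j : Fin (k + 1), ‖p.2 j‖) ^ (2 * (k : ℝ) / ((k : ℝ) + 1)) /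
      (nsq p.1 ^ ((m : ℝ) + 1 - (k : ℝ)) * nsq p.2 ^ (k : ℝ)))

def psiX (m k : ℕ) (p : (Fin (m + 1) → ℂ) × (Fin (k + 1) → ℂ)) : ℝ :=
  min (psiX1 m k p) (psiX2 m k p)

/-- Bi-scaling invariance. -/
def BiScalInv (m k : ℕ) (φ : ((Fin (m + 1) → ℂ) × (Fin (k + 1) → ℂ)) → ℝ) : Prop :=
  ∀ lam mu : ℂ, lam ≠ 0 → mu ≠ 0 →
    ∀ p : (Fin (m + 1) → ℂ) × (Fin (k + 1) → ℂ), φ (lam • p.1, mu • p.2) = φ p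

/-- Invariance under the group G acting on X. -/
def GInvX (m k : ℕ) (hkm : k ≤ m)
    (φ : ((Fin (m + 1) → ℂ) × (Fin (k + 1) → ℂ)) → ℝ) : Prop :=
  (∀ i j : Fin (k + 1), ∀ p : (Fin (m + 1) → ℂ) × (Fin (k + 1) → ℂ),
      φ (p.1 ∘ Equiv.swap (embX m k hkm i) (embX m k hkm j), p.2 ∘ Equiv.swap i j) = φ p) ∧
  (∀ i j : Fin (m + 1), k + 1 ≤ (i : ℕ) → k + 1 ≤ (j : ℕ) →
      ∀ p : (Fin (m + 1) → ℂ) × (Fin (k + 1) → ℂ),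
      φ (p.1 ∘ Equiv.swap i j, p.2) = φ p) ∧
  (∀ l : Fin (k + 1), ∀ θ : ℝ, ∀ p : (Fin (m + 1) → ℂ) × (Fin (k + 1) → ℂ),
      φ (Function.update p.1 (embX m k hkm l)
            (Complex.exp ((θ : ℂ) * Complex.I) * p.1 (embX m k hkm l)),
         Function.update p.2 l (Complex.exp ((θ : ℂ) * Complex.I) * p.2 l)) = φ p) ∧
  (∀ l : Fin (m + 1), k + 1 ≤ (l : ℕ) → ∀ θ : ℝ,
      ∀ p : (Fin (m + 1) → ℂ) × (Fin (k + 1) → ℂ),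
      φ (Function.update p.1 l (Complex.exp ((θ : ℂ) * Complex.I) * p.1 l), p.2) = φ p)

/-- A vector tangent to the orbit of the bi-scaling action at p. -/
def tangentX (m k : ℕ) (p v : (Fin (m + 1) → ℂ) × (Fin (k + 1) → ℂ)) : Prop :=
  ∃ a b : ℂ, v = (a • p.1, b • p.2)

/-- Local potential of g̃ plus φ along a curve. -/
def FX (m k : ℕ) (φ : ((Fin (m + 1) → ℂ) × (Fin (k + 1) → ℂ)) → ℝ)
    (c : ℂ → (Fin (m + 1) → ℂ) × (Fin (k + 1) → ℂ)) (t : ℂ) : ℝ :=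
  ((m : ℝ) + 1 - (k : ℝ)) * Real.log (nsq (c t).1) +
    (k : ℝ) * Real.log (nsq (c t).2) + φ (c t)

/-- g̃-admissibility. -/
def AdmX (m k : ℕ) (hkm : k ≤ m)
    (φ : ((Fin (m + 1) → ℂ) × (Fin (k + 1) → ℂ)) → ℝ) : Prop :=
  ∀ r : ℝ, 0 < r → ∀ c : ℂ → (Fin (m + 1) → ℂ) × (Fin (k + 1) → ℂ),
    DifferentiableOn ℂ c (Metric.ball 0 r) →
    (∀ t ∈ Metric.ball (0 : ℂ) r, inXhat m k hkm (c t)) →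
    ContDiffOn ℝ (⊤ : ℕ∞) (FX m k φ c) (Metric.ball 0 r) ∧
    (∀ t ∈ Metric.ball (0 : ℂ) r, 0 ≤ lap (FX m k φ c) t) ∧
    (∀ t ∈ Metric.ball (0 : ℂ) r, ¬ tangentX m k (c t) (deriv c t) →
      0 < lap (FX m k φ c) t)


/-! ### Auxiliary lemmas -/

section Aux

lemma auxLine1 (h : ℝ → ℝ) (t : ℂ) :
    lineDeriv ℝ (fun z : ℂ => h z.re) t 1 = deriv h t.re := by
  have e : (fun τ : ℝ => (fun z : ℂ => h z.re) (t + τ • (1:ℂ))) = fun τ => h (t.re + τ) := by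
    funext τ; simp [Complex.add_re, Complex.smul_re]
  show deriv (fun τ : ℝ => (fun z : ℂ => h z.re) (t + τ • (1:ℂ))) 0 = _
  rw [e, deriv_comp_const_add]
  norm_num

lemma auxLineI (h : ℝ → ℝ) (t : ℂ) :
    lineDeriv ℝ (fun z : ℂ => h z.re) t Complex.I = 0 := by
  have e : (fun τ : ℝ => (fun z : ℂ => h z.re) (t + τ • Complex.I)) = fun _ => h t.re := by
    funext τ; simp [Complex.add_re, Complex.smul_re]
  show deriv (fun τ : ℝ => (fun z : ℂ => h z.re) (t + τ • Complex.I)) 0 = _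
  rw [e, deriv_const]

lemma convex_of_lap (f : ℂ → ℝ)
    (hsm : ∀ r : ℝ, 0 < r → ContDiffOn ℝ (⊤ : ℕ∞) f (Metric.ball 0 r))
    (hlap : ∀ t : ℂ, 0 ≤ lap f t)
    (hre : ∀ t : ℂ, f t = f (t.re : ℂ)) :
    ConvexOn ℝ Set.univ (fun s : ℝ => f (s : ℂ)) := by
  have hf : ContDiff ℝ ((⊤ : ℕ∞) : WithTop ℕ∞) f := by
    rw [← contDiffOn_univ]
    apply contDiffOn_of_locally_contDiffOn
    intro x _
    refine ⟨Metric.ball 0 (‖x‖ + 1), Metric.isOpen_ball, ?_, ?_⟩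
    · simp only [Metric.mem_ball, dist_zero_right]; linarith [norm_nonneg x]
    · simpa using (hsm (‖x‖ + 1) (by positivity)).of_le (by simp)
  set g : ℝ → ℝ := fun s => f (s : ℂ) with hgdef
  have hg : ContDiff ℝ ((⊤ : ℕ∞) : WithTop ℕ∞) g := hf.comp Complex.ofRealCLM.contDiff
  have hfg : f = fun z : ℂ => g z.re := by
    funext t; simpa using hre t
  have hg' : ContDiff ℝ ((⊤ : ℕ∞) : WithTop ℕ∞) (deriv g) := (contDiff_infty_iff_deriv.mp hg).2
  have hlap2 : ∀ x : ℝ, 0 ≤ deriv (deriv g) x := by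
    intro x
    have h0 := hlap (x : ℂ)
    have e1 : (fun s : ℂ => lineDeriv ℝ f s 1) = fun s : ℂ => deriv g s.re := by
      funext s; rw [hfg]; exact auxLine1 g s
    have e2 : (fun s : ℂ => lineDeriv ℝ f s Complex.I) = fun _ : ℂ => (0:ℝ) := by
      funext s; rw [hfg]; exact auxLineI g s
    rw [lap, e1, e2] at h0
    have e3 : lineDeriv ℝ (fun s : ℂ => deriv g s.re) (x:ℂ) 1 = deriv (deriv g) x := by
      simpa using auxLine1 (deriv g) (x : ℂ)
    rw [e3] at h0
    have e4 : lineDeriv ℝ (fun _ : ℂ => (0:ℝ)) (x:ℂ) Complex.I = 0 := by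
      simpa using auxLineI (fun _ => (0:ℝ)) (x:ℂ)
    rw [e4] at h0
    simpa using h0
  apply convexOn_of_deriv2_nonneg convex_univ hg.continuous.continuousOn
    (hg.differentiable (by simp)).differentiableOn
    (hg'.differentiable (by simp)).differentiableOn
  intro x _
  simpa [Function.iterate_succ, Function.comp] using hlap2 x

lemma nsq_pos {N : ℕ} (z : Fin N → ℂ) (i0 : Fin N) (h : z i0 ≠ 0) : 0 < nsq z := by
  unfold nsq
  apply Finset.sum_pos' (fun i _ => by positivity)
  exact ⟨i0, Finset.mem_univ _, pow_pos (norm_pos_iff.mpr h) 2⟩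

lemma nsq_comp_equiv {N : ℕ} (z : Fin N → ℂ) (σ : Equiv.Perm (Fin N)) :
    nsq (z ∘ σ) = nsq z := Equiv.sum_comp σ (fun i => ‖z i‖ ^ 2)

/-- Index maps between `Fin (m-k)` and the "big" indices of `Fin (m+1)`. -/
def ib (m k : ℕ) (hkm : k + 1 ≤ m) (j : Fin (m - k)) : Fin (m + 1) :=
  ⟨k + 1 + (j : ℕ), by have := j.isLt; omega⟩

def idxb (m k : ℕ) (hkm : k + 1 ≤ m) (i : Fin (m + 1)) : Fin (m - k) :=
  if h : k + 1 ≤ (i : ℕ) then ⟨(i : ℕ) - (k + 1), by have := i.isLt; omega⟩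
  else ⟨0, by omega⟩

lemma ib_big (m k : ℕ) (hkm : k + 1 ≤ m) (j : Fin (m - k)) :
    k + 1 ≤ ((ib m k hkm j : Fin (m + 1)) : ℕ) := by simp [ib]

lemma idxb_ib (m k : ℕ) (hkm : k + 1 ≤ m) (j : Fin (m - k)) :
    idxb m k hkm (ib m k hkm j) = j := by
  have h := ib_big m k hkm j
  simp only [idxb, dif_pos h]
  apply Fin.ext
  simp [ib]

lemma ib_idxb (m k : ℕ) (hkm : k + 1 ≤ m) (i : Fin (m + 1)) (h : k + 1 ≤ (i : ℕ)) :
    ib m k hkm (idxb m k hkm i) = i := by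
  apply Fin.ext
  simp only [idxb, dif_pos h, ib]
  omega

/-- Rotating "big" coordinates by unit complex numbers does not change φ. -/
lemma rot_inv (m k : ℕ)
    (φ : ((Fin (m + 1) → ℂ) × (Fin (k + 1) → ℂ)) → ℝ)
    (hG4 : ∀ l : Fin (m + 1), k + 1 ≤ (l : ℕ) → ∀ θ : ℝ,
      ∀ p : (Fin (m + 1) → ℂ) × (Fin (k + 1) → ℂ),
      φ (Function.update p.1 l (Complex.exp ((θ : ℂ) * Complex.I) * p.1 l), p.2) = φ p)
    (z : Fin (m + 1) → ℂ) (ζ : Fin (k + 1) → ℂ) (θ : Fin (m + 1) → ℝ) :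
    φ (fun i => if k + 1 ≤ (i : ℕ) then Complex.exp ((θ i : ℂ) * Complex.I) * z i else z i, ζ)
      = φ (z, ζ) := by
  have key : ∀ S : Finset (Fin (m + 1)),
      φ (fun i => if i ∈ S ∧ k + 1 ≤ (i : ℕ) then Complex.exp ((θ i : ℂ) * Complex.I) * z i
          else z i, ζ) = φ (z, ζ) := by
    intro S
    induction S using Finset.induction_on with
    | empty => simp
    | @insert a S' ha ih =>
      by_cases hbig : k + 1 ≤ (a : ℕ)
      · have e : (fun i => if i ∈ insert a S' ∧ k + 1 ≤ (i : ℕ) then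
              Complex.exp ((θ i : ℂ) * Complex.I) * z i else z i)
            = Function.update
              (fun i => if i ∈ S' ∧ k + 1 ≤ (i : ℕ) then
                Complex.exp ((θ i : ℂ) * Complex.I) * z i else z i) a
              (Complex.exp ((θ a : ℂ) * Complex.I) *
                (fun i => if i ∈ S' ∧ k + 1 ≤ (i : ℕ) then
                  Complex.exp ((θ i : ℂ) * Complex.I) * z i else z i) a) := by
          funext i
          rcases eq_or_ne i a with rfl | hne
          · simp [Function.update_self, ha, hbig]
          · simp [Function.update_of_ne hne, Finset.mem_insert, hne]
        rw [e]
        exact (hG4 a hbig (θ a) (_, ζ)).trans ih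
      · have e : (fun i => if i ∈ insert a S' ∧ k + 1 ≤ (i : ℕ) then
              Complex.exp ((θ i : ℂ) * Complex.I) * z i else z i)
            = (fun i => if i ∈ S' ∧ k + 1 ≤ (i : ℕ) then
              Complex.exp ((θ i : ℂ) * Complex.I) * z i else z i) := by
          funext i
          rcases eq_or_ne i a with rfl | hne
          · simp [hbig, ha]
          · simp [Finset.mem_insert, hne]
        rw [e, ih]
  have := key Finset.univ
  simpa using this

end Aux

section Aux2

/-- Jensen's inequality for a symmetric convex function: the value at the mean vector
is at most the value anywhere. -/
lemma jensen_sym {n : ℕ} (hn : 0 < n) (Ψ : (Fin n → ℝ) → ℝ)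
    (hconv : ConvexOn ℝ Set.univ Ψ)
    (hsym : ∀ (a b : Fin n) (w : Fin n → ℝ), Ψ (w ∘ Equiv.swap a b) = Ψ w)
    (w : Fin n → ℝ) : Ψ (fun _ => (∑ i, w i) / n) ≤ Ψ w := by
  have hperm : ∀ σ : Equiv.Perm (Fin n), ∀ w : Fin n → ℝ, Ψ (w ∘ σ) = Ψ w := by
    intro σ
    refine Equiv.Perm.swap_induction_on σ (fun w => rfl) ?_
    intro f a b hab ih w
    have e : w ∘ ⇑(Equiv.swap a b * f) = (w ∘ ⇑(Equiv.swap a b)) ∘ ⇑f := by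
      funext i; simp [Equiv.Perm.mul_apply]
    rw [e, ih, hsym]
  set C : ℕ := Fintype.card (Equiv.Perm (Fin n)) with hC
  have hCpos : 0 < C := Fintype.card_pos
  have hSind : ∀ i j : Fin n, ∑ σ : Equiv.Perm (Fin n), w (σ i) = ∑ σ : Equiv.Perm (Fin n), w (σ j) := by
    intro i j
    apply Fintype.sum_equiv (Equiv.mulRight (Equiv.swap i j))
    intro σ
    simp [Equiv.Perm.mul_apply, Equiv.swap_apply_left]
  have hSval : ∀ i : Fin n, (∑ σ : Equiv.Perm (Fin n), w (σ i)) = (C : ℝ) * ((∑ l, w l) / n) := by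
    intro i
    have h1 : ∑ j : Fin n, ∑ σ : Equiv.Perm (Fin n), w (σ j)
        = (n : ℝ) * (∑ σ : Equiv.Perm (Fin n), w (σ i)) := by
      rw [Finset.sum_congr rfl (fun j _ => hSind j i)]
      simp [Finset.sum_const, nsmul_eq_mul, Finset.card_univ]
    have h2 : ∑ j : Fin n, ∑ σ : Equiv.Perm (Fin n), w (σ j)
        = (C : ℝ) * ∑ l, w l := by
      rw [Finset.sum_comm]
      have : ∀ σ : Equiv.Perm (Fin n), (∑ j : Fin n, w (σ j)) = ∑ l, w l := fun σ =>
        Equiv.sum_comp σ w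
      rw [Finset.sum_congr rfl (fun σ _ => this σ)]
      simp [Finset.sum_const, nsmul_eq_mul, Finset.card_univ, hC]
    have hne : (n : ℝ) ≠ 0 := by positivity
    field_simp
    linear_combination h2 - h1
  have key := hconv.map_sum_le (t := (Finset.univ : Finset (Equiv.Perm (Fin n))))
    (w := fun _ => (C : ℝ)⁻¹) (p := fun σ => w ∘ σ)
    (fun _ _ => by positivity)
    (by simp [Finset.sum_const, nsmul_eq_mul, Finset.card_univ, hC]
        try field_simp)
    (fun _ _ => Set.mem_univ _)
  have e1 : (∑ σ : Equiv.Perm (Fin n), (C : ℝ)⁻¹ • (w ∘ σ)) = fun _ => (∑ i, w i) / n := by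
    funext i
    rw [Finset.sum_apply]
    have : ∀ σ : Equiv.Perm (Fin n), ((C : ℝ)⁻¹ • (w ∘ σ)) i = (C : ℝ)⁻¹ * w (σ i) := by
      intro σ; simp
    rw [Finset.sum_congr rfl (fun σ _ => this σ), ← Finset.mul_sum, hSval i]
    field_simp
  have e2 : (∑ σ : Equiv.Perm (Fin n), (C : ℝ)⁻¹ • Ψ (w ∘ σ)) = Ψ w := by
    have : ∀ σ : Equiv.Perm (Fin n), (C : ℝ)⁻¹ • Ψ (w ∘ σ) = (C : ℝ)⁻¹ * Ψ w := by
      intro σ; rw [hperm]; simp [smul_eq_mul]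
    rw [Finset.sum_congr rfl (fun σ _ => this σ)]
    simp [Finset.sum_const, nsmul_eq_mul, Finset.card_univ, hC]
    try field_simp
  rw [e1, e2] at key
  exact key

end Aux2

section Aux3

/-- The point of X̂ with small coordinates from `zA` and big coordinates `exp (w j)`. -/
def PtX (m k : ℕ) (hkm : k + 1 ≤ m) (zA : Fin (m + 1) → ℂ) (w : Fin (m - k) → ℝ) :
    Fin (m + 1) → ℂ :=
  fun i => if (i : ℕ) ≤ k then zA i else Complex.exp ((w (idxb m k hkm i) : ℂ))

lemma convexPsi (m k : ℕ) (hkm : k + 1 ≤ m)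
    (φ : ((Fin (m + 1) → ℂ) × (Fin (k + 1) → ℂ)) → ℝ)
    (hG4 : ∀ l : Fin (m + 1), k + 1 ≤ (l : ℕ) → ∀ θ : ℝ,
      ∀ p : (Fin (m + 1) → ℂ) × (Fin (k + 1) → ℂ),
      φ (Function.update p.1 l (Complex.exp ((θ : ℂ) * Complex.I) * p.1 l), p.2) = φ p)
    (hadm : AdmX m k (by omega) φ)
    (zA : Fin (m + 1) → ℂ) (ζA : Fin (k + 1) → ℂ)
    (hzA0 : zA 0 = 1)
    (hζ : ∀ j : Fin (k + 1), ζA j = zA (embX m k (by omega) j)) :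
    ConvexOn ℝ Set.univ (fun w : Fin (m - k) → ℝ =>
      ((m : ℝ) + 1 - (k : ℝ)) * Real.log (nsq (PtX m k hkm zA w)) +
        (k : ℝ) * Real.log (nsq ζA) + φ (PtX m k hkm zA w, ζA)) := by
  set Ψ : (Fin (m - k) → ℝ) → ℝ := fun w =>
    ((m : ℝ) + 1 - (k : ℝ)) * Real.log (nsq (PtX m k hkm zA w)) +
      (k : ℝ) * Real.log (nsq ζA) + φ (PtX m k hkm zA w, ζA) with hΨ
  refine ⟨convex_univ, ?_⟩
  intro u _ v _ a b ha hb hab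
  -- the holomorphic curve
  set d : Fin (m - k) → ℝ := fun j => v j - u j with hd
  set c : ℂ → (Fin (m + 1) → ℂ) × (Fin (k + 1) → ℂ) := fun t =>
    (fun i => if (i : ℕ) ≤ k then zA i
      else Complex.exp ((u (idxb m k hkm i) : ℂ) + t * (d (idxb m k hkm i) : ℂ)), ζA) with hc
  set f : ℂ → ℝ := FX m k φ c with hf
  have hdiff : Differentiable ℂ c := by
    apply Differentiable.prodMk
    · rw [differentiable_pi]
      intro i
      by_cases hi : (i : ℕ) ≤ k
      · simp only [hc, hi, if_true]; exact differentiable_const _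
      · simp only [hc, hi, if_false]
        exact (((differentiable_id.mul_const _).const_add _)).cexp
    · exact differentiable_const _
  have hzAne : ∀ i : Fin (m + 1), (i : ℕ) ≤ k → zA i ≠ 0 → True := fun _ _ _ => trivial
  have hc1ne0 : ∀ t : ℂ, (c t).1 0 ≠ 0 := by
    intro t
    have h0 : ((0 : Fin (m + 1)) : ℕ) ≤ k := by simp
    simp only [hc, h0, if_true, hzA0]
    exact one_ne_zero
  have hin : ∀ t : ℂ, inXhat m k (by omega) (c t) := by
    intro t
    refine ⟨fun h => hc1ne0 t (by rw [h]; rfl), ?_, ?_⟩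
    · intro h
      have h0 : ζA 0 ≠ 0 := by
        rw [hζ 0]
        have : embX m k (by omega) (0 : Fin (k + 1)) = (0 : Fin (m + 1)) := by
          apply Fin.ext; simp [embX]
        rw [this, hzA0]; exact one_ne_zero
      exact h0 (by rw [show (c t).2 = ζA from rfl] at h; rw [h]; rfl)
    · intro i j
      have hemb : ∀ l : Fin (k + 1), (c t).1 (embX m k (by omega) l) = ζA l := by
        intro l
        have hl : ((embX m k (by omega : k ≤ m) l : Fin (m + 1)) : ℕ) ≤ k :=
          Nat.lt_succ_iff.mp l.isLt
        simp only [hc, hl, if_true]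
        exact (hζ l).symm
      rw [hemb i, hemb j]
      show ζA i * ζA j = ζA j * ζA i
      ring
  have hα : ∀ i : Fin (m + 1), ¬ ((i : ℕ) ≤ k) → k + 1 ≤ (i : ℕ) := fun i h => by omega
  -- f t depends only on Re t
  have hre : ∀ t : ℂ, f t = f (t.re : ℂ) := by
    intro t
    have habs : ∀ i : Fin (m + 1), ‖(c t).1 i‖ = ‖(c ((t.re : ℂ))).1 i‖ := by
      intro i
      by_cases hi : (i : ℕ) ≤ k
      · simp only [hc, hi, if_true]
      · simp only [hc, hi, if_false, Complex.norm_exp]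
        congr 1
        simp [Complex.add_re, Complex.mul_re, Complex.ofReal_re, Complex.ofReal_im]
    have hnsq : nsq (c t).1 = nsq (c (t.re : ℂ)).1 := by
      unfold nsq
      exact Finset.sum_congr rfl (fun i _ => by rw [habs i])
    have hφeq : φ (c t) = φ (c (t.re : ℂ)) := by
      have hform : (c t).1 = fun i : Fin (m + 1) => if k + 1 ≤ (i : ℕ) then
          Complex.exp (((t.im * d (idxb m k hkm i) : ℝ) : ℂ) * Complex.I) * (c (t.re : ℂ)).1 i
          else (c (t.re : ℂ)).1 i := by
        funext i
        by_cases hi : (i : ℕ) ≤ k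
        · have : ¬ (k + 1 ≤ (i : ℕ)) := by omega
          simp only [hc, hi, if_true, this, if_false]
        · have hbig : k + 1 ≤ (i : ℕ) := hα i hi
          simp only [hc, hi, if_false, hbig, if_true]
          rw [← Complex.exp_add]
          congr 1
          apply Complex.ext <;>
            simp [Complex.add_re, Complex.add_im, Complex.mul_re, Complex.mul_im] <;> ring
      have := rot_inv m k φ hG4 ((c ((t.re : ℂ))).1) ζA
        (fun i => t.im * d (idxb m k hkm i))
      rw [show c t = ((c t).1, ζA) from rfl, hform]
      rw [show c ((t.re : ℂ)) = ((c ((t.re : ℂ))).1, ζA) from rfl] at this ⊢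
      exact this
    rw [hf]
    unfold FX
    rw [hnsq, hφeq]
  -- admissibility data
  have hsm : ∀ r : ℝ, 0 < r → ContDiffOn ℝ (⊤ : ℕ∞) f (Metric.ball 0 r) := by
    intro r hr
    exact (hadm r hr c (hdiff.differentiableOn) (fun t _ => hin t)).1
  have hlap : ∀ t : ℂ, 0 ≤ lap f t := by
    intro t
    have hr : (0:ℝ) < ‖t‖ + 1 := by positivity
    have hmem : t ∈ Metric.ball (0 : ℂ) (‖t‖ + 1) := by
      simp [Metric.mem_ball, dist_zero_right]
    exact (hadm _ hr c (hdiff.differentiableOn) (fun s _ => hin s)).2.1 t hmem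
  have hconv1 := convex_of_lap f hsm hlap hre
  -- identify f on the reals with Ψ along the segment
  have hfs : ∀ s : ℝ, f (s : ℂ) = Ψ (u + s • d) := by
    intro s
    have hpt : (c (s : ℂ)).1 = PtX m k hkm zA (u + s • d) := by
      funext i
      by_cases hi : (i : ℕ) ≤ k
      · simp only [hc, PtX, hi, if_true]
      · simp only [hc, PtX, hi, if_false]
        congr 1
        push_cast
        simp only [Pi.add_apply, Pi.smul_apply, smul_eq_mul]
        push_cast
        ring
    have hfull : c ((s : ℝ) : ℂ) = (PtX m k hkm zA (u + s • d), ζA) := by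
      rw [show c ((s : ℝ) : ℂ) = ((c ((s : ℝ) : ℂ)).1, ζA) from rfl, hpt]
    rw [hf]
    unfold FX
    rw [hfull]
  -- conclude by one-dimensional convexity
  have h01 : Ψ (a • u + b • v) = f ((b : ℂ)) := by
    rw [hfs b]
    congr 1
    funext i
    simp only [Pi.add_apply, Pi.smul_apply, smul_eq_mul, hd, Pi.sub_apply]
    have : a = 1 - b := by linarith
    rw [this]; ring
  have h0 : f ((0 : ℝ) : ℂ) = Ψ u := by
    rw [hfs 0]; congr 1; funext i; simp
  have h1 : f ((1 : ℝ) : ℂ) = Ψ v := by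
    rw [hfs 1]; congr 1; funext i
    simp only [Pi.add_apply, Pi.smul_apply, smul_eq_mul, hd, Pi.sub_apply, one_smul]
    ring
  have key := hconv1.2 (Set.mem_univ (0 : ℝ)) (Set.mem_univ (1 : ℝ)) ha hb hab
  simp only [smul_eq_mul, mul_zero, mul_one, zero_add] at key
  rw [h0, h1] at key
  rw [h01]
  exact_mod_cast key

end Aux3

section Aux4

lemma symmPsi (m k : ℕ) (hkm : k + 1 ≤ m)
    (φ : ((Fin (m + 1) → ℂ) × (Fin (k + 1) → ℂ)) → ℝ)
    (hG2 : ∀ i j : Fin (m + 1), k + 1 ≤ (i : ℕ) → k + 1 ≤ (j : ℕ) →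
      ∀ p : (Fin (m + 1) → ℂ) × (Fin (k + 1) → ℂ),
      φ (p.1 ∘ Equiv.swap i j, p.2) = φ p)
    (zA : Fin (m + 1) → ℂ) (ζA : Fin (k + 1) → ℂ)
    (a b : Fin (m - k)) (w : Fin (m - k) → ℝ) :
    ((m : ℝ) + 1 - (k : ℝ)) * Real.log (nsq (PtX m k hkm zA (w ∘ Equiv.swap a b))) +
        (k : ℝ) * Real.log (nsq ζA) + φ (PtX m k hkm zA (w ∘ Equiv.swap a b), ζA)
      = ((m : ℝ) + 1 - (k : ℝ)) * Real.log (nsq (PtX m k hkm zA w)) +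
        (k : ℝ) * Real.log (nsq ζA) + φ (PtX m k hkm zA w, ζA) := by
  have hswap : PtX m k hkm zA (w ∘ Equiv.swap a b)
      = (PtX m k hkm zA w) ∘ (Equiv.swap (ib m k hkm a) (ib m k hkm b)) := by
    funext i
    set σ := Equiv.swap (ib m k hkm a) (ib m k hkm b) with hσ
    by_cases hi : (i : ℕ) ≤ k
    · have hne1 : i ≠ ib m k hkm a := by
        intro h; have := ib_big m k hkm a; rw [← h] at this; omega
      have hne2 : i ≠ ib m k hkm b := by
        intro h; have := ib_big m k hkm b; rw [← h] at this; omega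
      have : σ i = i := Equiv.swap_apply_of_ne_of_ne hne1 hne2
      simp only [Function.comp_apply, this, PtX, hi, if_true]
    · have hbig : k + 1 ≤ (i : ℕ) := by omega
      rcases eq_or_ne i (ib m k hkm a) with rfl | hia
      · have : σ (ib m k hkm a) = ib m k hkm b := Equiv.swap_apply_left _ _
        simp only [Function.comp_apply, this, PtX, hi, if_false,
          not_le.mpr (Nat.lt_succ_of_le (by exact le_of_lt (Nat.lt_of_lt_of_le (Nat.lt_succ_self k) (ib_big m k hkm b))))]
        have h1 : ¬ ((ib m k hkm b : ℕ) ≤ k) := by have := ib_big m k hkm b; omega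
        rw [if_neg h1]
        congr 2
        rw [idxb_ib, idxb_ib]
        simp [Equiv.swap_apply_left]
      rcases eq_or_ne i (ib m k hkm b) with rfl | hib
      · have : σ (ib m k hkm b) = ib m k hkm a := Equiv.swap_apply_right _ _
        simp only [Function.comp_apply, this, PtX, hi, if_false]
        have h1 : ¬ ((ib m k hkm a : ℕ) ≤ k) := by have := ib_big m k hkm a; omega
        rw [if_neg h1]
        congr 2
        rw [idxb_ib, idxb_ib]
        simp [Equiv.swap_apply_right]
      · have : σ i = i := Equiv.swap_apply_of_ne_of_ne hia hib
        simp only [Function.comp_apply, this, PtX, hi, if_false]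
        congr 2
        have hja : idxb m k hkm i ≠ a := by
          intro h
          apply hia
          rw [← ib_idxb m k hkm i hbig, h]
        have hjb : idxb m k hkm i ≠ b := by
          intro h
          apply hib
          rw [← ib_idxb m k hkm i hbig, h]
        rw [Equiv.swap_apply_of_ne_of_ne hja hjb]
  rw [hswap]
  rw [nsq_comp_equiv (PtX m k hkm zA w) (Equiv.swap (ib m k hkm a) (ib m k hkm b))]
  congr 1
  exact hG2 (ib m k hkm a) (ib m k hkm b) (ib_big m k hkm a) (ib_big m k hkm b)
    (PtX m k hkm zA w, ζA)

end Aux4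

theorem stmt10 (m k : ℕ) (hm : 2 ≤ m) (hk : 1 ≤ k) (hkm : k ≤ m - 1)
    (φ : ((Fin (m + 1) → ℂ) × (Fin (k + 1) → ℂ)) → ℝ)
    (hcont : ContinuousOn φ {p | inXhat m k (by omega) p})
    (hscal : BiScalInv m k φ) (hG : GInvX m k (by omega) φ)
    (hadm : AdmX m k (by omega) φ)
    (x : Fin (m + 1) → ℝ) (hx : ∀ i, 0 < x i) :
    let zA : Fin (m + 1) → ℂ := fun i => if i = 0 then 1 else (x i : ℂ)
    let ζA : Fin (k + 1) → ℂ := fun j => zA (embX m k (by omega) j)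
    let ζv : ℝ := (∏ i ∈ Finset.univ.filter (fun i : Fin (m + 1) => k + 1 ≤ (i : ℕ)), x i) ^
      (1 / ((m : ℝ) - (k : ℝ)))
    let zB : Fin (m + 1) → ℂ := fun i => if (i : ℕ) ≤ k then zA i else (ζv : ℂ)
    φ (zB, ζA) - psiX m k (zB, ζA) ≤ φ (zA, ζA) - psiX m k (zA, ζA) := by
  intro zA ζA ζv zB
  have hkm1 : k + 1 ≤ m := by omega
  have hn : 0 < m - k := by omega
  have hncast : ((m - k : ℕ) : ℝ) = (m : ℝ) - (k : ℝ) := by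
    push_cast [Nat.cast_sub (by omega : k ≤ m)]; ring
  have hnne : ((m : ℝ) - (k : ℝ)) ≠ 0 := by
    rw [← hncast]
    have : (m - k : ℕ) ≠ 0 := by omega
    exact_mod_cast this
  have hzA : zA = fun i => if i = 0 then 1 else (x i : ℂ) := rfl
  have hζA : ζA = fun j => zA (embX m k (by omega) j) := rfl
  have hzB : zB = fun i : Fin (m + 1) => if (i : ℕ) ≤ k then zA i else (ζv : ℂ) := rfl
  -- basic positivity
  have hzAne : ∀ i, zA i ≠ 0 := by
    intro i; rw [hzA]
    by_cases h : i = 0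
    · simp [h]
    · simp only [h, if_false]
      exact_mod_cast (hx i).ne'
  have hP : 0 < ∏ i ∈ Finset.univ.filter (fun i : Fin (m + 1) => k + 1 ≤ (i : ℕ)), x i :=
    Finset.prod_pos (fun i _ => hx i)
  have hζv : 0 < ζv := Real.rpow_pos_of_pos hP _
  have hzBne : ∀ i, zB i ≠ 0 := by
    intro i; rw [hzB]
    by_cases h : (i : ℕ) ≤ k
    · simp only [h, if_true]; exact hzAne i
    · simp only [h, if_false]
      exact_mod_cast hζv.ne'
  have hζAne : ∀ j, ζA j ≠ 0 := fun j => hzAne _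
  have h0small : ((0 : Fin (m + 1)) : ℕ) ≤ k := by simp
  have hnsqA : 0 < nsq zA := nsq_pos zA 0 (hzAne 0)
  have hnsqB : 0 < nsq zB := nsq_pos zB 0 (hzBne 0)
  have hnsqζ : 0 < nsq ζA := nsq_pos ζA 0 (hζAne 0)
  -- index bookkeeping
  have hfilter : Finset.univ.filter (fun i : Fin (m + 1) => k + 1 ≤ (i : ℕ))
      = Finset.image (ib m k hkm1) Finset.univ := by
    ext i
    simp only [Finset.mem_filter, Finset.mem_univ, true_and, Finset.mem_image]
    constructor
    · intro hi
      refine ⟨⟨(i : ℕ) - (k + 1), by have := i.isLt; omega⟩, ?_⟩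
      apply Fin.ext; simp [ib]; omega
    · rintro ⟨j, rfl⟩
      exact ib_big m k hkm1 j
  have hib_inj : ∀ a ∈ (Finset.univ : Finset (Fin (m - k))), ∀ b ∈ (Finset.univ : Finset (Fin (m - k))),
      ib m k hkm1 a = ib m k hkm1 b → a = b := by
    intro a _ b _ h
    apply Fin.ext
    have := congrArg (fun i : Fin (m + 1) => (i : ℕ)) h
    simp [ib] at this
    omega
  have hcard : (Finset.univ.filter (fun i : Fin (m + 1) => k + 1 ≤ (i : ℕ))).card = m - k := by
    rw [hfilter, Finset.card_image_of_injOn hib_inj]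
    simp
  -- the exponent vectors
  set wA : Fin (m - k) → ℝ := fun j => Real.log (x (ib m k hkm1 j)) with hwA
  have hsumwA : ∑ j, wA j
      = Real.log (∏ i ∈ Finset.univ.filter (fun i : Fin (m + 1) => k + 1 ≤ (i : ℕ)), x i) := by
    rw [Real.log_prod (fun i _ => (hx i).ne'), hfilter,
      Finset.sum_image hib_inj]
  have hlogζv : Real.log ζv
      = Real.log (∏ i ∈ Finset.univ.filter (fun i : Fin (m + 1) => k + 1 ≤ (i : ℕ)), x i)
        * (1 / ((m : ℝ) - (k : ℝ))) := by
    rw [show (ζv : ℝ) = (∏ i ∈ Finset.univ.filter (fun i : Fin (m + 1) => k + 1 ≤ (i : ℕ)), x i) ^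
      (1 / ((m : ℝ) - (k : ℝ))) from rfl, Real.log_rpow hP]
    ring
  have hmean : (fun _ : Fin (m - k) => (∑ j, wA j) / ((m - k : ℕ) : ℝ))
      = (fun _ : Fin (m - k) => Real.log ζv) := by
    funext j
    rw [hsumwA, hlogζv, hncast]
    field_simp
  -- points recovered from exponent vectors
  have hPA : PtX m k hkm1 zA wA = zA := by
    funext i
    by_cases hi : (i : ℕ) ≤ k
    · simp only [PtX, hi, if_true]
    · simp only [PtX, hi, if_false]
      have hbig : k + 1 ≤ (i : ℕ) := by omega
      rw [hwA]
      simp only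
      rw [ib_idxb m k hkm1 i hbig, ← Complex.ofReal_exp, Real.exp_log (hx i)]
      have hi0 : i ≠ 0 := by
        intro h; rw [h] at hbig; simp at hbig
      rw [hzA]; simp [hi0]
  have hPB : PtX m k hkm1 zA (fun _ => Real.log ζv) = zB := by
    funext i
    by_cases hi : (i : ℕ) ≤ k
    · simp only [PtX, hi, if_true]; rw [hzB]; simp [hi]
    · simp only [PtX, hi, if_false]
      rw [← Complex.ofReal_exp, Real.exp_log hζv, hzB]
      simp [hi]
  -- convexity and symmetry give the key inequality
  have hζj : ∀ j : Fin (k + 1), ζA j = zA (embX m k (by omega) j) := fun j => rfl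
  have hzA0 : zA 0 = 1 := by rw [hzA]; simp
  have hconv := convexPsi m k hkm1 φ hG.2.2.2 hadm zA ζA hzA0 hζj
  have hsym : ∀ (a b : Fin (m - k)) (w : Fin (m - k) → ℝ),
      (fun w : Fin (m - k) → ℝ =>
        ((m : ℝ) + 1 - (k : ℝ)) * Real.log (nsq (PtX m k hkm1 zA w)) +
          (k : ℝ) * Real.log (nsq ζA) + φ (PtX m k hkm1 zA w, ζA)) (w ∘ Equiv.swap a b)
      = (fun w : Fin (m - k) → ℝ =>
        ((m : ℝ) + 1 - (k : ℝ)) * Real.log (nsq (PtX m k hkm1 zA w)) +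
          (k : ℝ) * Real.log (nsq ζA) + φ (PtX m k hkm1 zA w, ζA)) w := by
    intro a b w
    exact symmPsi m k hkm1 φ hG.2.1 zA ζA a b w
  have key := jensen_sym hn _ hconv hsym wA
  rw [hmean] at key
  simp only [hPA, hPB] at key
  -- numerators of ψ agree at the two points
  have hsmallprod : (∏ i ∈ Finset.univ.filter (fun i : Fin (m + 1) => (i : ℕ) ≤ k),
      ‖zB i‖) = ∏ i ∈ Finset.univ.filter (fun i : Fin (m + 1) => (i : ℕ) ≤ k),
      ‖zA i‖ := by
    apply Finset.prod_congr rfl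
    intro i hi
    rw [Finset.mem_filter] at hi
    rw [hzB]; simp [hi.2]
  have hbigprod : (∏ i ∈ Finset.univ.filter (fun i : Fin (m + 1) => k + 1 ≤ (i : ℕ)),
      ‖zB i‖) = ∏ i ∈ Finset.univ.filter (fun i : Fin (m + 1) => k + 1 ≤ (i : ℕ)),
      ‖zA i‖ := by
    have hB : (∏ i ∈ Finset.univ.filter (fun i : Fin (m + 1) => k + 1 ≤ (i : ℕ)),
        ‖zB i‖) = ζv ^ (m - k : ℕ) := by
      have hc : ∀ i ∈ Finset.univ.filter (fun i : Fin (m + 1) => k + 1 ≤ (i : ℕ)),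
          ‖zB i‖ = ζv := by
        intro i hi
        rw [Finset.mem_filter] at hi
        have hnle : ¬ ((i : ℕ) ≤ k) := by omega
        rw [hzB]
        simp only [hnle, if_false]
        rw [Complex.norm_real, Real.norm_eq_abs, abs_of_pos hζv]
      rw [Finset.prod_congr rfl hc, Finset.prod_const, hcard]
    have hA : (∏ i ∈ Finset.univ.filter (fun i : Fin (m + 1) => k + 1 ≤ (i : ℕ)),
        ‖zA i‖) = ∏ i ∈ Finset.univ.filter (fun i : Fin (m + 1) => k + 1 ≤ (i : ℕ)), x i := by
      apply Finset.prod_congr rfl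
      intro i hi
      rw [Finset.mem_filter] at hi
      have hi0 : i ≠ 0 := by
        intro h; rw [h] at hi; simp at hi
      rw [hzA]
      simp only [hi0, if_false]
      rw [Complex.norm_real, Real.norm_eq_abs, abs_of_pos (hx i)]
    have hpow : ζv ^ (m - k : ℕ)
        = ∏ i ∈ Finset.univ.filter (fun i : Fin (m + 1) => k + 1 ≤ (i : ℕ)), x i := by
      rw [show (ζv : ℝ) = (∏ i ∈ Finset.univ.filter (fun i : Fin (m + 1) => k + 1 ≤ (i : ℕ)), x i) ^
        (1 / ((m : ℝ) - (k : ℝ))) from rfl]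
      rw [← Real.rpow_natCast _ (m - k), ← Real.rpow_mul hP.le, hncast]
      rw [one_div_mul_cancel hnne, Real.rpow_one]
    rw [hB, hA, hpow]
  -- ψ difference
  set α : ℝ := (m : ℝ) + 1 - (k : ℝ) with hα
  set δ : ℝ := α * (Real.log (nsq zA) - Real.log (nsq zB)) with hδ
  have hlogdiv : ∀ N R : ℝ, 0 < N → 0 < R →
      Real.log (N / (R ^ α * nsq ζA ^ (k : ℝ)))
        = Real.log N - α * Real.log R - (k : ℝ) * Real.log (nsq ζA) := by
    intro N R hN hR
    rw [Real.log_div hN.ne' (by positivity), Real.log_mul (by positivity) (by positivity),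
      Real.log_rpow hR, Real.log_rpow hnsqζ]
    ring
  have hnum1 : 0 < (∏ i ∈ Finset.univ.filter (fun i : Fin (m + 1) => (i : ℕ) ≤ k),
      ‖zA i‖) ^ (2 * ((m : ℝ) + 1 - (k : ℝ)) / ((k : ℝ) + 1)) *
      (∏ j : Fin (k + 1), ‖ζA j‖) ^ (2 * (k : ℝ) / ((k : ℝ) + 1)) := by
    have h1 : 0 < ∏ i ∈ Finset.univ.filter (fun i : Fin (m + 1) => (i : ℕ) ≤ k),
        ‖zA i‖ := Finset.prod_pos (fun i _ => norm_pos_iff.mpr (hzAne i))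
    have h2 : 0 < ∏ j : Fin (k + 1), ‖ζA j‖ :=
      Finset.prod_pos (fun j _ => norm_pos_iff.mpr (hζAne j))
    positivity
  have hnum2 : 0 < (∏ i ∈ Finset.univ.filter (fun i : Fin (m + 1) => k + 1 ≤ (i : ℕ)),
      ‖zA i‖) ^ (2 * ((m : ℝ) + 1 - (k : ℝ)) / ((m : ℝ) - (k : ℝ))) *
      (∏ j : Fin (k + 1), ‖ζA j‖) ^ (2 * (k : ℝ) / ((k : ℝ) + 1)) := by
    have h1 : 0 < ∏ i ∈ Finset.univ.filter (fun i : Fin (m + 1) => k + 1 ≤ (i : ℕ)),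
        ‖zA i‖ := Finset.prod_pos (fun i _ => norm_pos_iff.mpr (hzAne i))
    have h2 : 0 < ∏ j : Fin (k + 1), ‖ζA j‖ :=
      Finset.prod_pos (fun j _ => norm_pos_iff.mpr (hζAne j))
    positivity
  have hψ1 : psiX1 m k (zB, ζA) = psiX1 m k (zA, ζA) + δ := by
    unfold psiX1
    simp only [hsmallprod]
    rw [hlogdiv _ _ hnum1 hnsqA, hlogdiv _ _ hnum1 hnsqB, hδ]
    ring
  have hψ2 : psiX2 m k (zB, ζA) = psiX2 m k (zA, ζA) + δ := by
    unfold psiX2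
    simp only [hbigprod]
    rw [hlogdiv _ _ hnum2 hnsqA, hlogdiv _ _ hnum2 hnsqB, hδ]
    ring
  have hψ : psiX m k (zB, ζA) = psiX m k (zA, ζA) + δ := by
    unfold psiX
    rw [hψ1, hψ2, min_add_add_right]
  -- conclude
  rw [hψ]
  have hkey : φ (zB, ζA) - φ (zA, ζA) ≤ δ := by
    rw [hδ]
    nlinarith [key]
  linarith [hkey]
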